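/- Let ρ_d > 0, b > 0, let ω : [0, ∞) → (0, ∞) be continuous and bounded, and let α : [0,1] × [0, ∞) → (0, ∞) be continuous, bounded, and nonincreasing in its second argument. Assume there exists Ã > 0 such that for all A ≥ Ã, ∫₀¹ α(x, A)·exp( (1/ρ_d)·∫₀ˣ (b − α(y, A)) dy ) dx < ρ_d. Then every nonnegative C¹ solution (A*(t), Ω*(x,t)) of the Approximation 3 system on t ≥ 0 remains bounded for all time: sup_{t ≥ 0} A*(t) < ∞ and sup_{t ≥ 0, x ∈ [0,1]} Ω*(x,t) < ∞. -/

import Mathlib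

/-!
Write `P = ω(Ω̄) A` for the flux from `A` into the transport equation. Along the characteristic
`t = s + x / ρ` the density is `P(s) / ρ` times an explicit growth factor, so by Fubini the flux
returning to `A` during `[T₁, T]` is at most `∫_{T₁ - 1/ρ}^{T} P(s) ψ(s) ds`, where `ρ ψ(s)` is the
integral of the hypothesis with `α(y, A)` replaced by `α(y, A(s + y/ρ))`. Because `α` is
nonincreasing in `A`, `ψ(s) ≤ 1` whenever `A ≥ Ã` along that characteristic.

Since `A' ≥ -sup ω · A`, Gronwall lets `A` drop by at most a fixed factor within time `1/ρ`. If
`A(t₀)` is large, let `T₁` be the last time before `t₀` with `A(T₁) = Ā` for a suitable level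
`Ā ≥ Ã`. Then `A ≥ Ã` on `[T₁, t₀ + 1/ρ]`, so on `[T₁, t₀]` the returning flux is paid for by `P`,
and `A(t₀) - Ā` is bounded by the contribution of `[T₁ - 1/ρ, T₁]`, where Gronwall bounds `A` by
`Ā e^{sup ω / ρ}`. This bounds `A`; the characteristic formula then bounds `Ω`.
-/

open Real Set

/-- `(A, Ω)` is a C¹ solution of the Approximation 3 system for `t > 0`:
`dA/dt = −ω(Ω̄(t)) A(t) + ∫₀¹ α(x, A(t)) Ω(x,t) dx`;
`∂Ω/∂t + ρ ∂Ω/∂x = (b − α(x, A(t))) Ω(x,t)` for `x ∈ [0,1]`;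
`Ω(0,t) = ω(Ω̄(t)) A(t) / ρ`, where `Ω̄(t) = ∫₀¹ Ω(x,t) dx`.
Here `Ωt` and `Ωx` are the (continuous) partial derivatives of `Ω`. -/
def IsApprox3Solution (ρ b : ℝ) (α : ℝ → ℝ → ℝ) (ω : ℝ → ℝ) (A : ℝ → ℝ)
    (Ω Ωt Ωx : ℝ → ℝ → ℝ) : Prop :=
  (∀ t ∈ Set.Ioi (0 : ℝ),
    HasDerivAt A
      (-(ω (∫ x in (0 : ℝ)..1, Ω x t)) * A t +
        ∫ x in (0 : ℝ)..1, α x (A t) * Ω x t) t) ∧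
  (∀ t ∈ Set.Ioi (0 : ℝ), ∀ x ∈ Set.Icc (0 : ℝ) 1,
    HasDerivAt (fun s => Ω x s) (Ωt x t) t ∧
    HasDerivWithinAt (fun y => Ω y t) (Ωx x t) (Set.Icc 0 1) x ∧
    Ωt x t + ρ * Ωx x t = (b - α x (A t)) * Ω x t) ∧
  (∀ t ∈ Set.Ioi (0 : ℝ),
    Ω 0 t = ω (∫ x in (0 : ℝ)..1, Ω x t) * A t / ρ) ∧
  ContinuousOn A (Set.Ici 0) ∧
  ContinuousOn (fun p : ℝ × ℝ => Ω p.1 p.2) (Set.Icc 0 1 ×ˢ Set.Ici 0) ∧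
  ContinuousOn (fun p : ℝ × ℝ => Ωt p.1 p.2) (Set.Icc 0 1 ×ˢ Set.Ioi 0) ∧
  ContinuousOn (fun p : ℝ × ℝ => Ωx p.1 p.2) (Set.Icc 0 1 ×ˢ Set.Ioi 0)

open MeasureTheory intervalIntegral Filter Topology Asymptotics

lemma isLittleO_sub_sub_of_tendsto_deriv {s : Set ℝ} {x m : ℝ} (hx : x ∈ s)
    (hs : Convex ℝ s) {g g' : ℝ → ℝ → ℝ}
    (hg : ∀ᶠ p in 𝓝[s] x ×ˢ 𝓝[s] x, HasDerivWithinAt (g p.1) (g' p.1 p.2) s p.2)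
    (hg' : Tendsto (Function.uncurry g') (𝓝[s] x ×ˢ 𝓝[s] x) (𝓝 m)) :
    (fun y => g y y - g y x - (y - x) * m) =o[𝓝[s] x] fun y => y - x := by
  have hid : Tendsto id (𝓝[s] x) (𝓝 x) := nhdsWithin_le_nhds
  have hseg : ∀ᶠ y in 𝓝[s] x, segment ℝ x y ⊆ s := by
    filter_upwards [self_mem_nhdsWithin] with y hy using hs.segment_subset hx hy
  refine isLittleO_iff.2 fun ε hε => ?_
  have hclose : ∀ᶠ p in 𝓝[s] x ×ˢ 𝓝[s] x, |g' p.1 p.2 - m| < ε := by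
    filter_upwards [Metric.tendsto_nhds.1 hg' ε hε] with p hp
    rwa [Real.dist_eq] at hp
  filter_upwards [hseg, Eventually.segment_of_prod_nhdsWithin
      (r := fun y z => HasDerivWithinAt (g y) (g' y z) s z) tendsto_const_nhds hid hg hseg,
    Eventually.segment_of_prod_nhdsWithin (r := fun y z => |g' y z - m| < ε)
      tendsto_const_nhds hid hclose hseg] with y hseg hder hbound
  have := (convex_segment x y).norm_image_sub_le_of_norm_hasDerivWithin_le
    (f := fun z => g y z - z * m) (f' := fun z => g' y z - m)
    (fun z hz => ((hder z hz).mono hseg).sub (by simpa using (hasDerivWithinAt_id z _).mul_const m))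
    (fun z hz => (hbound z hz).le) (left_mem_segment ℝ x y) (right_mem_segment ℝ x y)
  simp only [Real.norm_eq_abs] at this ⊢
  convert this using 2
  ring

lemma hasDerivWithinAt_comp_characteristic {ρ s : ℝ} (hρ : 0 < ρ) (hs : 0 < s)
    {Ω Ωt Ωx : ℝ → ℝ → ℝ}
    (hΩt : ∀ t ∈ Ioi (0 : ℝ), ∀ x ∈ Icc (0 : ℝ) 1, HasDerivAt (fun u => Ω x u) (Ωt x t) t)
    (hΩx : ∀ t ∈ Ioi (0 : ℝ), ∀ x ∈ Icc (0 : ℝ) 1,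
      HasDerivWithinAt (fun y => Ω y t) (Ωx x t) (Icc 0 1) x)
    (hΩx_cont : ContinuousOn (fun p : ℝ × ℝ => Ωx p.1 p.2) (Icc 0 1 ×ˢ Ioi 0))
    {x : ℝ} (hx : x ∈ Icc (0 : ℝ) 1) :
    HasDerivWithinAt (fun y => Ω y (s + y / ρ))
      (Ωx x (s + x / ρ) + Ωt x (s + x / ρ) / ρ) (Icc 0 1) x := by
  have hpos : ∀ y ∈ Icc (0 : ℝ) 1, s + y / ρ ∈ Ioi 0 := fun y hy =>
    add_pos_of_pos_of_nonneg hs (div_nonneg hy.1 hρ.le)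
  have hline : Continuous fun y => s + y / ρ := continuous_const.add (continuous_id.div_const ρ)
  have hmem : ∀ᶠ p in 𝓝[Icc 0 1] x ×ˢ 𝓝[Icc 0 1] x, p.1 ∈ Icc (0 : ℝ) 1 ∧ p.2 ∈ Icc (0 : ℝ) 1 :=
    prod_mem_prod self_mem_nhdsWithin self_mem_nhdsWithin
  have hpath : Tendsto (fun p : ℝ × ℝ => (p.2, s + p.1 / ρ)) (𝓝[Icc 0 1] x ×ˢ 𝓝[Icc 0 1] x)
      (𝓝[Icc 0 1 ×ˢ Ioi 0] (x, s + x / ρ)) := by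
    refine tendsto_nhdsWithin_iff.2 ⟨?_, hmem.mono fun p hp => ⟨hp.2, hpos _ hp.1⟩⟩
    exact ((continuous_snd.prodMk (hline.comp continuous_fst)).tendsto (x, x)).mono_left
      ((Filter.prod_mono nhdsWithin_le_nhds nhdsWithin_le_nhds).trans nhds_prod_eq.ge)
  -- the increment in space is taken at the moving time `s + y / ρ`, hence needs continuity of `Ωx`
  have hspace := isLittleO_sub_sub_of_tendsto_deriv hx (convex_Icc 0 1)
    (g := fun y z => Ω z (s + y / ρ)) (g' := fun y z => Ωx z (s + y / ρ))
    (hmem.mono fun p hp => hΩx _ (hpos _ hp.1) _ hp.2)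
    ((hΩx_cont (x, s + x / ρ) ⟨hx, hpos x hx⟩).tendsto.comp hpath)
  have htime : (fun y => Ω x (s + y / ρ) - Ω x (s + x / ρ) - (y - x) / ρ * Ωt x (s + x / ρ))
      =o[𝓝[Icc 0 1] x] fun y => y - x := by
    have := (hasDerivAt_iff_isLittleO.1 (hΩt _ (hpos x hx) x hx)).comp_tendsto
      ((hline.tendsto x).mono_left (nhdsWithin_le_nhds (s := Icc 0 1)))
    refine IsLittleO.of_const_mul_right (c := ρ⁻¹) (this.congr (fun y => ?_) (fun y => ?_))
    · simp only [Function.comp_apply, smul_eq_mul]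
      ring
    · simp only [Function.comp_apply]
      ring
  refine hasDerivWithinAt_iff_isLittleO.2 ((hspace.add htime).congr_left fun y => ?_)
  simp only [smul_eq_mul]
  ring

lemma eq_mul_exp_integral_of_hasDerivWithinAt {a b : ℝ} {c g : ℝ → ℝ} (hc : Continuous c)
    (hg : ∀ x ∈ Icc a b, HasDerivWithinAt g (c x * g x) (Icc a b) x) :
    ∀ x ∈ Icc a b, g x = g a * exp (∫ y in a..x, c y) := by
  have hprim : ∀ x, HasDerivAt (fun u => ∫ y in a..u, c y) (c x) x := fun x =>
    (hc.integral_hasStrictDerivAt a x).hasDerivAt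
  have hexp : ∀ x, HasDerivAt (fun u => exp (-∫ y in a..u, c y))
      (exp (-∫ y in a..x, c y) * -c x) x := fun x => (hprim x).neg.exp
  have hconst := constant_of_has_deriv_right_zero
    (f := fun u => g u * exp (-∫ y in a..u, c y))
    (fun x hx => (hg x hx).continuousWithinAt.mul (hexp x).continuousAt.continuousWithinAt)
    (fun x hx => by
      have := ((hg x (Ico_subset_Icc_self hx)).mul (hexp x).hasDerivWithinAt).mono_of_mem_nhdsWithin
        (Icc_mem_nhdsGE_of_mem hx)
      exact this.congr_deriv (by ring))
  intro x hx
  have h := hconst x hx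
  simp only [integral_same, neg_zero, exp_zero, mul_one] at h
  rw [← h, mul_assoc, ← exp_add, neg_add_cancel, exp_zero, mul_one]

lemma eq_mul_exp_along_characteristic {ρ s : ℝ} (hρ : 0 < ρ) (hs : 0 < s)
    {Ω Ωt Ωx k : ℝ → ℝ → ℝ}
    (hΩt : ∀ t ∈ Ioi (0 : ℝ), ∀ x ∈ Icc (0 : ℝ) 1, HasDerivAt (fun u => Ω x u) (Ωt x t) t)
    (hΩx : ∀ t ∈ Ioi (0 : ℝ), ∀ x ∈ Icc (0 : ℝ) 1,
      HasDerivWithinAt (fun y => Ω y t) (Ωx x t) (Icc 0 1) x)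
    (hΩx_cont : ContinuousOn (fun p : ℝ × ℝ => Ωx p.1 p.2) (Icc 0 1 ×ˢ Ioi 0))
    (hpde : ∀ t ∈ Ioi (0 : ℝ), ∀ x ∈ Icc (0 : ℝ) 1, Ωt x t + ρ * Ωx x t = k x t * Ω x t)
    (hk : Continuous fun y => k y (s + y / ρ)) {x : ℝ} (hx : x ∈ Icc (0 : ℝ) 1) :
    Ω x (s + x / ρ) = Ω 0 s * exp ((1 / ρ) * ∫ y in (0 : ℝ)..x, k y (s + y / ρ)) := by
  have hsol := eq_mul_exp_integral_of_hasDerivWithinAt (hk.div_const ρ)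
    (g := fun y => Ω y (s + y / ρ))
    (fun y hy => by
      convert hasDerivWithinAt_comp_characteristic hρ hs hΩt hΩx hΩx_cont hy using 1
      have := hpde _ (add_pos_of_pos_of_nonneg hs (div_nonneg hy.1 hρ.le)) y hy
      generalize s + y / ρ = t at this ⊢
      field_simp
      linear_combination -this) x hx
  simpa [intervalIntegral.integral_div, div_eq_inv_mul] using hsol

lemma intervalIntegral_swap_of_continuous {F : ℝ → ℝ → ℝ} (hF : Continuous (Function.uncurry F))
    (a b c d : ℝ) : ∫ x in a..b, ∫ y in c..d, F x y = ∫ y in c..d, ∫ x in a..b, F x y :=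
  intervalIntegral_intervalIntegral_swap <|
    (hF.continuousOn.integrableOn_compact (isCompact_uIcc.prod isCompact_uIcc)).mono_set
      (prod_mono uIoc_subset_uIcc uIoc_subset_uIcc)

lemma integral_integral_comp_sub_le {G : ℝ → ℝ → ℝ} (hG : Continuous (Function.uncurry G))
    {d : ℝ → ℝ} (hd : Continuous d) {τ a b : ℝ} (hab : a ≤ b)
    (hd0 : ∀ x ∈ Icc (0 : ℝ) 1, 0 ≤ d x ∧ d x ≤ τ)
    (hG0 : ∀ x ∈ Icc (0 : ℝ) 1, ∀ s ∈ Icc (a - τ) b, 0 ≤ G x s) :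
    ∫ t in a..b, ∫ x in (0 : ℝ)..1, G x (t - d x) ≤
      ∫ s in (a - τ)..b, ∫ x in (0 : ℝ)..1, G x s := by
  have hGd : Continuous (Function.uncurry fun t x => G x (t - d x)) :=
    hG.comp (continuous_snd.prodMk (continuous_fst.sub (hd.comp continuous_snd)))
  rw [intervalIntegral_swap_of_continuous hGd, intervalIntegral_swap_of_continuous
    (F := fun s x => G x s) (hG.comp continuous_swap)]
  refine integral_mono_on zero_le_one ?_ ?_ fun x hx => ?_
  · exact (continuous_parametric_intervalIntegral_of_continuous'
      (f := fun x t => G x (t - d x)) (hGd.comp continuous_swap) a b).intervalIntegrable 0 1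
  · exact (continuous_parametric_intervalIntegral_of_continuous' hG _ _).intervalIntegrable 0 1
  · have hGx : Continuous (G x) := hG.comp (continuous_const.prodMk continuous_id)
    rw [intervalIntegral.integral_comp_sub_right (G x)]
    exact integral_mono_interval (by linarith [(hd0 x hx).2]) (by linarith)
      (by linarith [(hd0 x hx).1])
      ((ae_restrict_mem measurableSet_Ioc).mono fun s hs => hG0 x hx s ⟨hs.1.le, hs.2⟩)
      (hGx.intervalIntegrable _ _)

lemma le_mul_exp_of_hasDerivAt_ge {A A' : ℝ → ℝ} {S : ℝ} (hS : 0 ≤ S)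
    (hA : ContinuousOn A (Ici 0)) (hA0 : ∀ t ≥ 0, 0 ≤ A t)
    (hderiv : ∀ t > 0, HasDerivAt A (A' t) t) (hlow : ∀ t > 0, -(S * A t) ≤ A' t)
    {s u τ : ℝ} (hs : 0 ≤ s) (hsu : s ≤ u) (huτ : u ≤ s + τ) : A s ≤ A u * exp (S * τ) := by
  have hmono : MonotoneOn (fun t => A t * exp (S * t)) (Ici 0) := by
    refine monotoneOn_of_hasDerivWithinAt_nonneg (convex_Ici 0)
      (hA.mul (continuous_const.mul continuous_id).rexp.continuousOn)
      (fun t ht => ((hderiv t ?_).mul ((hasDerivAt_id t).const_mul S).exp).hasDerivWithinAt)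
      fun t ht => ?_
    · simpa using ht
    · rw [interior_Ici] at ht
      have := hlow t ht
      simp only [id, mul_one]
      nlinarith [exp_pos (S * t)]
  have h := hmono hs (hs.trans hsu) hsu
  calc A s = A s * exp (S * s) / exp (S * s) := by field_simp
    _ ≤ A u * exp (S * u) / exp (S * s) := by gcongr
    _ = A u * exp (S * (u - s)) := by rw [mul_sub, exp_sub, mul_div_assoc]
    _ ≤ A u * exp (S * τ) := by
      gcongr
      · exact hA0 u (hs.trans hsu)
      · linarith

lemma exists_last_le {f : ℝ → ℝ} {a b c : ℝ} (hab : a ≤ b) (hf : ContinuousOn f (Icc a b))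
    (ha : f a ≤ c) (hb : c < f b) :
    ∃ t₁ ∈ Icc a b, f t₁ ≤ c ∧ ∀ t ∈ Icc t₁ b, c ≤ f t := by
  set s := Icc a b ∩ f ⁻¹' Iic c
  have hs : IsClosed s := hf.preimage_isClosed_of_isClosed isClosed_Icc isClosed_Iic
  have hbdd : BddAbove s := bddAbove_Icc.mono inter_subset_left
  have hmem : sSup s ∈ s := hs.csSup_mem ⟨a, ⟨left_mem_Icc.2 hab, ha⟩⟩ hbdd
  refine ⟨sSup s, hmem.1, hmem.2, ?_⟩
  have habove : Ioc (sSup s) b ⊆ Icc a b ∩ f ⁻¹' Ici c := fun t ht => by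
    have hat : t ∈ Icc a b := ⟨hmem.1.1.trans ht.1.le, ht.2⟩
    refine ⟨hat, show c ≤ f t from (not_le.1 fun hle => ?_).le⟩
    exact (le_csSup hbdd ⟨hat, hle⟩).not_gt ht.1
  have hne : sSup s ≠ b := fun h => (h ▸ hmem.2 : f b ≤ c).not_gt hb
  rw [← closure_Ioc hne]
  exact fun t ht => (closure_minimal habove
    (hf.preimage_isClosed_of_isClosed isClosed_Icc isClosed_Ici) ht).2

lemma ContinuousOn.continuous_comp_max {f : ℝ → ℝ} (hf : ContinuousOn f (Ici 0)) :
    Continuous fun t => f (max t 0) :=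
  hf.comp_continuous (continuous_id.max continuous_const) fun t => le_max_right t 0

lemma ContinuousOn.continuous_comp_projIcc_max {f : ℝ → ℝ → ℝ}
    (hf : ContinuousOn (fun p : ℝ × ℝ => f p.1 p.2) (Icc 0 1 ×ˢ Ici 0)) :
    Continuous fun p : ℝ × ℝ => f (projIcc (0 : ℝ) 1 zero_le_one p.1) (max p.2 0) :=
  hf.comp_continuous (f := fun p : ℝ × ℝ => ((projIcc (0 : ℝ) 1 zero_le_one p.1 : ℝ), max p.2 0))
    ((continuous_subtype_val.comp (continuous_projIcc.comp continuous_fst)).prodMk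
      (continuous_snd.max continuous_const))
    fun _ => ⟨Subtype.coe_prop _, mem_Ici.2 (le_max_right _ _)⟩

/- Along the characteristic `t = s + x / ρ`, with `c x = α x (A (s + x / ρ))`, the density is
multiplied by `growth ρ b c x`; `returnIntegral ρ b c / ρ` is the fraction of the influx at `x = 0`
that returns to `A`. -/
noncomputable def growth (ρ b : ℝ) (c : ℝ → ℝ) (x : ℝ) : ℝ :=
  exp ((1 / ρ) * ∫ y in (0 : ℝ)..x, (b - c y))

noncomputable def returnIntegral (ρ b : ℝ) (c : ℝ → ℝ) : ℝ :=
  ∫ x in (0 : ℝ)..1, c x * growth ρ b c x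

section Growth

variable {ρ b : ℝ} {c c' : ℝ → ℝ}

lemma growth_pos (x : ℝ) : 0 < growth ρ b c x := exp_pos _

lemma growth_zero : growth ρ b c 0 = 1 := by simp [growth]

lemma hasDerivAt_growth (hc : Continuous c) (x : ℝ) :
    HasDerivAt (growth ρ b c) ((b - c x) / ρ * growth ρ b c x) x := by
  have hbc : Continuous fun y => b - c y := continuous_const.sub hc
  have := ((hbc.integral_hasStrictDerivAt 0 x).hasDerivAt.const_mul (1 / ρ)).exp
  exact this.congr_deriv (by simp only [growth]; ring)

lemma continuous_growth (hc : Continuous c) : Continuous (growth ρ b c) :=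
  continuous_iff_continuousAt.2 fun x => (hasDerivAt_growth hc x).continuousAt

lemma continuous_growth_param {c : ℝ → ℝ → ℝ} (hc : Continuous (Function.uncurry c)) :
    Continuous fun p : ℝ × ℝ => growth ρ b (c p.1) p.2 :=
  (continuous_const.mul (continuous_parametric_intervalIntegral_of_continuous
    (f := fun (p : ℝ × ℝ) y => b - c p.1 y)
    (continuous_const.sub (hc.comp (continuous_fst.fst.prodMk continuous_snd)))
    continuous_snd)).rexp

lemma continuous_returnIntegral {c : ℝ → ℝ → ℝ} (hc : Continuous (Function.uncurry c)) :
    Continuous fun s => returnIntegral ρ b (c s) :=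
  continuous_parametric_intervalIntegral_of_continuous'
    (hc.mul ((continuous_growth_param hc).comp (continuous_fst.prodMk continuous_snd))) 0 1

lemma returnIntegral_eq (hρ : ρ ≠ 0) (hc : Continuous c) :
    returnIntegral ρ b c = b * (∫ x in (0 : ℝ)..1, growth ρ b c x) + ρ * (1 - growth ρ b c 1) := by
  have hg := continuous_growth (ρ := ρ) (b := b) hc
  have hg' : Continuous fun x => (b - c x) / ρ * growth ρ b c x :=
    ((continuous_const.sub hc).div_const ρ).mul hg
  have hftc := integral_eq_sub_of_hasDerivAt (f := fun x => ρ * growth ρ b c x)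
    (fun x _ => (hasDerivAt_growth hc x).const_mul ρ)
    ((continuous_const.mul hg').intervalIntegrable 0 1)
  have hsplit : ∀ x, c x * growth ρ b c x =
      b * growth ρ b c x - ρ * ((b - c x) / ρ * growth ρ b c x) := fun x => by
    field_simp
    ring
  simp only [returnIntegral, hsplit]
  rw [integral_sub (f := fun x => b * growth ρ b c x)
    (g := fun x => ρ * ((b - c x) / ρ * growth ρ b c x))
    ((continuous_const.mul hg).intervalIntegrable 0 1)
    ((continuous_const.mul hg').intervalIntegrable 0 1), hftc, intervalIntegral.integral_const_mul,
    growth_zero]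
  ring

lemma growth_le_exp (hρ : 0 < ρ) (hb : 0 ≤ b) (hc : Continuous c)
    (hc0 : ∀ y ∈ Icc (0 : ℝ) 1, 0 ≤ c y) {x : ℝ} (hx : x ∈ Icc (0 : ℝ) 1) :
    growth ρ b c x ≤ exp (b / ρ) := by
  have : ∫ y in (0 : ℝ)..x, (b - c y) ≤ ∫ _ in (0 : ℝ)..x, b :=
    integral_mono_on hx.1 ((continuous_const.sub hc).intervalIntegrable 0 x)
      intervalIntegrable_const fun y hy => sub_le_self b (hc0 y ⟨hy.1, hy.2.trans hx.2⟩)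
  rw [intervalIntegral.integral_const, smul_eq_mul, sub_zero] at this
  refine exp_le_exp.2 ?_
  rw [one_div_mul_eq_div]
  gcongr
  nlinarith [hx.2]

lemma returnIntegral_le (hρ : 0 < ρ) (hb : 0 ≤ b) (hc : Continuous c)
    (hc0 : ∀ y ∈ Icc (0 : ℝ) 1, 0 ≤ c y) : returnIntegral ρ b c ≤ b * exp (b / ρ) + ρ := by
  have hint : ∫ x in (0 : ℝ)..1, growth ρ b c x ≤ ∫ _ in (0 : ℝ)..1, exp (b / ρ) :=
    integral_mono_on zero_le_one ((continuous_growth hc).intervalIntegrable 0 1)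
      intervalIntegrable_const fun x hx => growth_le_exp hρ hb hc hc0 hx
  rw [intervalIntegral.integral_const, smul_eq_mul, sub_zero, one_mul] at hint
  rw [returnIntegral_eq hρ.ne' hc]
  nlinarith [growth_pos (ρ := ρ) (b := b) (c := c) 1]

lemma growth_mul_growth_le (hρ : 0 < ρ) (hc : Continuous c) (hc' : Continuous c')
    (hle : ∀ y ∈ Icc (0 : ℝ) 1, c y ≤ c' y) {x : ℝ} (hx : x ∈ Icc (0 : ℝ) 1) :
    growth ρ b c x * growth ρ b c' 1 ≤ growth ρ b c 1 * growth ρ b c' x := by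
  have hbc : Continuous fun y => b - c y := continuous_const.sub hc
  have hbc' : Continuous fun y => b - c' y := continuous_const.sub hc'
  have htail : ∫ y in x..1, (b - c' y) ≤ ∫ y in x..1, (b - c y) :=
    integral_mono_on hx.2 (hbc'.intervalIntegrable x 1) (hbc.intervalIntegrable x 1)
      fun y hy => sub_le_sub_left (hle y ⟨hx.1.trans hy.1, hy.2⟩) b
  have hsplit := integral_add_adjacent_intervals (hbc.intervalIntegrable (μ := volume) 0 x)
    (hbc.intervalIntegrable x 1)
  have hsplit' := integral_add_adjacent_intervals (hbc'.intervalIntegrable (μ := volume) 0 x)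
    (hbc'.intervalIntegrable x 1)
  simp only [growth, ← exp_add, ← mul_add]
  exact exp_le_exp.2 (mul_le_mul_of_nonneg_left (by linarith) (by positivity))

/- By `returnIntegral_eq`, `returnIntegral ρ b c ≤ ρ` means `b * ∫₀¹ growth c x / growth c 1 ≤ ρ`,
and `growth c x / growth c 1 = exp (-(1 / ρ) * ∫ₓ¹ (b - c))` increases with `c`. -/
lemma returnIntegral_le_of_le (hρ : 0 < ρ) (hb : 0 ≤ b) (hc : Continuous c) (hc' : Continuous c')
    (hle : ∀ y ∈ Icc (0 : ℝ) 1, c y ≤ c' y) (h' : returnIntegral ρ b c' ≤ ρ) :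
    returnIntegral ρ b c ≤ ρ := by
  rw [returnIntegral_eq hρ.ne' hc]
  rw [returnIntegral_eq hρ.ne' hc'] at h'
  have hcomp : (∫ x in (0 : ℝ)..1, growth ρ b c x) * growth ρ b c' 1 ≤
      growth ρ b c 1 * ∫ x in (0 : ℝ)..1, growth ρ b c' x := by
    rw [← intervalIntegral.integral_mul_const, ← intervalIntegral.integral_const_mul]
    exact integral_mono_on zero_le_one
      ((continuous_growth hc).mul continuous_const |>.intervalIntegrable 0 1)
      (continuous_const.mul (continuous_growth hc') |>.intervalIntegrable 0 1)
      fun x hx => growth_mul_growth_le hρ hc hc' hle hx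
  have h1 := growth_pos (ρ := ρ) (b := b) (c := c) 1
  have h1' := growth_pos (ρ := ρ) (b := b) (c := c') 1
  nlinarith [mul_le_mul_of_nonneg_left hcomp hb]

lemma returnIntegral_congr (h : EqOn c c' (Icc 0 1)) :
    returnIntegral ρ b c = returnIntegral ρ b c' := by
  have hg : ∀ x ∈ Icc (0 : ℝ) 1, growth ρ b c x = growth ρ b c' x := fun x hx => by
    simp only [growth]
    congr 2
    refine integral_congr fun y hy => ?_
    rw [uIcc_of_le hx.1] at hy
    simp only [h ⟨hy.1, hy.2.trans hx.2⟩]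
  refine integral_congr fun x hx => ?_
  rw [uIcc_of_le zero_le_one] at hx
  simp only [h hx, hg x hx]

end Growth

lemma sub_le_of_integral_le {A P I ψ : ℝ → ℝ} {τ T₁ T B : ℝ} (hτ : 0 ≤ τ) (hT : T₁ ≤ T)
    (hderiv : ∀ t ∈ Icc T₁ T, HasDerivAt A (I t - P t) t)
    (hI : ContinuousOn I (Icc T₁ T)) (hPψ : ContinuousOn (fun s => P s * ψ s) (Icc (T₁ - τ) T))
    (hP : ContinuousOn P (Icc T₁ T))
    (hbal : ∫ t in T₁..T, I t ≤ ∫ s in T₁ - τ..T, P s * ψ s)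
    (hψ : ∀ s ∈ Icc T₁ T, P s * ψ s ≤ P s) (hB : ∀ s ∈ Icc (T₁ - τ) T₁, P s * ψ s ≤ B) :
    A T - A T₁ ≤ τ * B := by
  have hT' : T₁ - τ ≤ T₁ := sub_le_self T₁ hτ
  have hleft := (hPψ.mono (Icc_subset_Icc le_rfl hT)).intervalIntegrable_of_Icc (μ := volume) hT'
  have hright := (hPψ.mono (Icc_subset_Icc hT' le_rfl)).intervalIntegrable_of_Icc (μ := volume) hT
  have hftc := integral_eq_sub_of_hasDerivAt (fun t ht => hderiv t (uIcc_of_le hT ▸ ht))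
    ((hI.sub hP).intervalIntegrable_of_Icc hT)
  rw [integral_sub (hI.intervalIntegrable_of_Icc hT) (hP.intervalIntegrable_of_Icc hT)] at hftc
  rw [← integral_add_adjacent_intervals hleft hright] at hbal
  have hedge : ∫ s in T₁ - τ..T₁, P s * ψ s ≤ τ * B := by
    simpa using integral_mono_on hT' hleft (intervalIntegrable_const (μ := volume) (c := B)) hB
  have hmain : ∫ s in T₁..T, P s * ψ s ≤ ∫ s in T₁..T, P s :=
    integral_mono_on hT hright (hP.intervalIntegrable_of_Icc hT) hψ
  linarith

theorem exists_bound_of_delayed_balance {A P I ψ : ℝ → ℝ} {τ S K Ã : ℝ} (hτ : 0 < τ)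
    (hS : 0 ≤ S) (hK : 0 ≤ K) (hA : ContinuousOn A (Ici 0)) (hP : ContinuousOn P (Ici 0))
    (hI : ContinuousOn I (Ici 0)) (hψ : ContinuousOn ψ (Ici 0))
    (hderiv : ∀ t > 0, HasDerivAt A (I t - P t) t) (hA0 : ∀ t ≥ 0, 0 ≤ A t)
    (hP0 : ∀ t ≥ 0, 0 ≤ P t) (hPS : ∀ t ≥ 0, P t ≤ S * A t) (hI0 : ∀ t ≥ 0, 0 ≤ I t)
    (hbal : ∀ T₁ T, τ < T₁ → T₁ ≤ T → ∫ t in T₁..T, I t ≤ ∫ s in T₁ - τ..T, P s * ψ s)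
    (hψK : ∀ s ≥ 0, ψ s ≤ K) (hψ1 : ∀ s ≥ 0, (∀ u ∈ Icc s (s + τ), Ã ≤ A u) → ψ s ≤ 1) :
    ∃ L, ∀ t ≥ 0, A t ≤ L := by
  have hgron : ∀ {s u}, 0 ≤ s → s ≤ u → u ≤ s + τ → A s ≤ A u * exp (S * τ) :=
    le_mul_exp_of_hasDerivAt_ge hS hA hA0 hderiv fun t ht => by
      linarith [hPS t ht.le, hI0 t ht.le]
  obtain ⟨C, hC⟩ := (isCompact_Icc (a := 0) (b := 2 * τ)).bddAbove_image
    (hA.mono Icc_subset_Ici_self)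
  set Ā := max Ã C + 1
  have hĀ : ∀ t ∈ Icc 0 (2 * τ), A t < Ā := fun t ht =>
    (hC ⟨t, ht, rfl⟩).trans_lt (by linarith [le_max_right Ã C])
  have hĀ0 : 0 < Ā := (hA0 0 le_rfl).trans_lt (hĀ 0 ⟨le_rfl, by positivity⟩)
  set B := S * (Ā * exp (S * τ)) * K
  have hB0 : 0 ≤ τ * B := by positivity
  refine ⟨max (Ā + τ * B) (Ã * exp (S * τ)), fun t₀ ht₀ => not_lt.1 fun hL => ?_⟩
  have hL1 : Ā + τ * B < A t₀ := (le_max_left _ _).trans_lt hL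
  have hL2 : Ã * exp (S * τ) < A t₀ := (le_max_right _ _).trans_lt hL
  have ht₀τ : 2 * τ < t₀ := not_le.1 fun h => by linarith [hĀ t₀ ⟨ht₀, h⟩]
  have hsub : Icc (2 * τ) t₀ ⊆ Ici 0 := fun t ht => (by positivity : (0 : ℝ) ≤ 2 * τ).trans ht.1
  obtain ⟨T₁, hT₁, hAT₁, habove⟩ := exists_last_le ht₀τ.le (hA.mono hsub)
    (hĀ _ ⟨by positivity, le_rfl⟩).le (by linarith)
  have hT₁τ : τ < T₁ := by linarith [hT₁.1]
  have hwindow : ∀ u ∈ Icc T₁ (t₀ + τ), Ã ≤ A u := fun u hu => by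
    rcases le_total u t₀ with h | h
    · linarith [habove u ⟨hu.1, h⟩, le_max_left Ã C]
    · exact le_of_mul_le_mul_right ((hL2.trans_le (hgron ht₀ h hu.2)).le) (exp_pos (S * τ))
  have hbox : ∀ {a b}, τ ≤ a → Icc a b ⊆ Ici 0 := fun ha t ht => hτ.le.trans (ha.trans ht.1)
  have hdiff := sub_le_of_integral_le (A := A) (τ := τ) (B := B) hτ.le hT₁.2
    (fun t ht => hderiv t (by linarith [ht.1])) (hI.mono (hbox hT₁τ.le))
    ((hP.mul hψ).mono (hbox (by linarith [hT₁.1]))) (hP.mono (hbox hT₁τ.le))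
    (hbal T₁ t₀ hT₁τ hT₁.2)
    (fun s hs => mul_le_of_le_one_right (hP0 s (by linarith [hs.1])) <|
      hψ1 s (by linarith [hs.1]) fun u hu => hwindow u ⟨hs.1.trans hu.1, by linarith [hu.2, hs.2]⟩)
    (fun s hs => by
      have hs0 : 0 ≤ s := by linarith [hs.1]
      have hAs : A s ≤ Ā * exp (S * τ) :=
        (hgron hs0 hs.2 (by linarith [hs.1])).trans (by gcongr)
      calc P s * ψ s ≤ P s * K := mul_le_mul_of_nonneg_left (hψK s hs0) (hP0 s hs0)
        _ ≤ S * A s * K := mul_le_mul_of_nonneg_right (hPS s hs0) hK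
        _ ≤ B := mul_le_mul_of_nonneg_right (mul_le_mul_of_nonneg_left hAs hS) hK)
  linarith

namespace IsApprox3Solution

variable {ρ b : ℝ} {α : ℝ → ℝ → ℝ} {ω A : ℝ → ℝ} {Ω Ωt Ωx : ℝ → ℝ → ℝ}

/- Clamping the arguments into `[0, 1] × [0, ∞)` makes all data continuous on the whole plane
without changing the solution there. -/
lemma clamp (hsol : IsApprox3Solution ρ b α ω A Ω Ωt Ωx) (hA0 : ∀ t ≥ 0, 0 ≤ A t)
    (hΩ0 : ∀ t ≥ 0, ∀ x ∈ Icc (0 : ℝ) 1, 0 ≤ Ω x t) :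
    IsApprox3Solution ρ b (fun x a => α (projIcc (0 : ℝ) 1 zero_le_one x) (max a 0))
      (fun a => ω (max a 0)) (fun t => A (max t 0))
      (fun x t => Ω (projIcc (0 : ℝ) 1 zero_le_one x) (max t 0)) Ωt Ωx := by
  obtain ⟨hA, hpde, hbc, hAc, hΩc, hΩt, hΩx⟩ := hsol
  have hΩ : ∀ t ≥ 0, ∀ x ∈ Icc (0 : ℝ) 1, Ω (projIcc (0 : ℝ) 1 zero_le_one x) (max t 0) = Ω x t :=
    fun t ht x hx => by simp [projIcc_of_mem _ hx, max_eq_left ht]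
  have hbar : ∀ t ≥ 0, ∫ x in (0 : ℝ)..1, Ω (projIcc (0 : ℝ) 1 zero_le_one x) (max t 0) =
      ∫ x in (0 : ℝ)..1, Ω x t := fun t ht =>
    integral_congr fun x hx => hΩ t ht x (by rwa [uIcc_of_le zero_le_one] at hx)
  have hbar0 : ∀ t ≥ 0, 0 ≤ ∫ x in (0 : ℝ)..1, Ω x t := fun t ht =>
    integral_nonneg zero_le_one fun x hx => hΩ0 t ht x hx
  have hα : ∀ t ≥ 0, ∀ x ∈ Icc (0 : ℝ) 1,
      α (projIcc (0 : ℝ) 1 zero_le_one x) (max (A (max t 0)) 0) = α x (A t) :=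
    fun t ht x hx => by simp [projIcc_of_mem _ hx, max_eq_left ht, max_eq_left (hA0 t ht)]
  have hnear : ∀ t ∈ Ioi (0 : ℝ), ∀ᶠ s in 𝓝 t, max s 0 = s := fun t ht =>
    (lt_mem_nhds ht).mono fun s hs => max_eq_left hs.le
  refine ⟨fun t ht => ?_, fun t ht x hx => ⟨?_, ?_, ?_⟩, fun t ht => ?_, ?_, ?_, hΩt, hΩx⟩
  · have hflux : ∫ x in (0 : ℝ)..1, α (projIcc (0 : ℝ) 1 zero_le_one x) (max (A (max t 0)) 0) *
        Ω (projIcc (0 : ℝ) 1 zero_le_one x) (max t 0) = ∫ x in (0 : ℝ)..1, α x (A t) * Ω x t :=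
      integral_congr fun x hx => by
        rw [uIcc_of_le zero_le_one] at hx
        rw [hα t ht.le x hx, hΩ t ht.le x hx]
    beta_reduce
    rw [hflux, hbar t ht.le, max_eq_left (hbar0 t ht.le), max_eq_left ht.le]
    exact (hA t ht).congr_of_eventuallyEq ((hnear t ht).mono fun s hs => by simp only [hs])
  · simp only [projIcc_of_mem _ hx]
    exact (hpde t ht x hx).1.congr_of_eventuallyEq ((hnear t ht).mono fun s hs => by simp only [hs])
  · refine (hpde t ht x hx).2.1.congr (fun y hy => hΩ t ht.le y hy) (hΩ t ht.le x hx)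
  · beta_reduce
    rw [hα t ht.le x hx, hΩ t ht.le x hx]
    exact (hpde t ht x hx).2.2
  · beta_reduce
    rw [hbar t ht.le, hΩ t ht.le 0 (left_mem_Icc.2 zero_le_one), max_eq_left (hbar0 t ht.le),
      max_eq_left ht.le]
    exact hbc t ht
  · exact hAc.continuous_comp_max.continuousOn
  · exact hΩc.continuous_comp_projIcc_max.continuousOn

lemma continuous_along_characteristic (hα : Continuous (Function.uncurry α)) (hA : Continuous A) :
    Continuous (Function.uncurry fun s y => α y (A (s + y / ρ))) :=
  hα.comp (continuous_snd.prodMk (hA.comp (continuous_fst.add (continuous_snd.div_const ρ))))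

lemma continuous_influx (hω : Continuous ω) (hA : Continuous A)
    (hΩ : Continuous (Function.uncurry Ω)) :
    Continuous fun s => ω (∫ x in (0 : ℝ)..1, Ω x s) * A s :=
  (hω.comp (continuous_parametric_intervalIntegral_of_continuous'
    (f := fun s x => Ω x s) (hΩ.comp continuous_swap) 0 1)).mul hA

lemma eq_mul_growth (hsol : IsApprox3Solution ρ b α ω A Ω Ωt Ωx) (hρ : 0 < ρ)
    (hα : Continuous (Function.uncurry α)) (hA : Continuous A) {s : ℝ} (hs : 0 < s) {x : ℝ}
    (hx : x ∈ Icc (0 : ℝ) 1) :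
    Ω x (s + x / ρ) =
      ω (∫ y in (0 : ℝ)..1, Ω y s) * A s / ρ * growth ρ b (fun y => α y (A (s + y / ρ))) x := by
  obtain ⟨-, hpde, hbc, -, -, -, hΩx⟩ := hsol
  rw [eq_mul_exp_along_characteristic (k := fun x t => b - α x (A t)) hρ hs
    (fun t ht x hx => (hpde t ht x hx).1) (fun t ht x hx => (hpde t ht x hx).2.1) hΩx
    (fun t ht x hx => (hpde t ht x hx).2.2)
    (continuous_const.sub ((continuous_along_characteristic hα hA).comp
      (continuous_const.prodMk continuous_id))) hx, hbc s hs]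
  rfl

lemma integral_outflux_le (hsol : IsApprox3Solution ρ b α ω A Ω Ωt Ωx) (hρ : 0 < ρ)
    (hα : Continuous (Function.uncurry α)) (hα0 : ∀ x a, 0 ≤ α x a) (hω : Continuous ω)
    (hω0 : ∀ a, 0 ≤ ω a) (hA : Continuous A) (hA0 : ∀ t, 0 ≤ A t)
    (hΩ : Continuous (Function.uncurry Ω)) {T₁ T : ℝ} (hT₁ : 1 / ρ < T₁) (hT : T₁ ≤ T) :
    ∫ t in T₁..T, ∫ x in (0 : ℝ)..1, α x (A t) * Ω x t ≤
      ∫ s in T₁ - 1 / ρ..T, ω (∫ x in (0 : ℝ)..1, Ω x s) * A s *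
        (returnIntegral ρ b (fun y => α y (A (s + y / ρ))) / ρ) := by
  set P := fun s => ω (∫ x in (0 : ℝ)..1, Ω x s) * A s
  set c := fun s y => α y (A (s + y / ρ))
  have hc := continuous_along_characteristic (ρ := ρ) hα hA
  have hP : Continuous P := continuous_influx hω hA hΩ
  set G := fun x s => c s x * (P s / ρ * growth ρ b (c s) x)
  have hG : Continuous (Function.uncurry G) :=
    (hc.comp continuous_swap).mul (((hP.comp continuous_snd).div_const ρ).mul
      ((continuous_growth_param hc).comp continuous_swap))
  have hrep : ∀ t ∈ uIcc T₁ T, ∫ x in (0 : ℝ)..1, α x (A t) * Ω x t =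
      ∫ x in (0 : ℝ)..1, G x (t - x / ρ) := by
    intro t ht
    refine integral_congr fun x hx => ?_
    rw [uIcc_of_le zero_le_one] at hx
    rw [uIcc_of_le hT] at ht
    have hpos : 0 < t - x / ρ := by
      have : x / ρ ≤ 1 / ρ := div_le_div_of_nonneg_right hx.2 hρ.le
      linarith [ht.1]
    have h := hsol.eq_mul_growth hρ hα hA hpos hx
    rw [sub_add_cancel] at h
    simp only [G, c, P, h, sub_add_cancel]
  have hslice : ∀ s, ∫ x in (0 : ℝ)..1, G x s = P s * (returnIntegral ρ b (c s) / ρ) := by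
    intro s
    simp only [G, returnIntegral, mul_left_comm (c s _), intervalIntegral.integral_const_mul]
    ring
  rw [integral_congr hrep]
  calc _ ≤ ∫ s in T₁ - 1 / ρ..T, ∫ x in (0 : ℝ)..1, G x s :=
        integral_integral_comp_sub_le hG (continuous_id.div_const ρ) hT
          (fun x hx => ⟨div_nonneg hx.1 hρ.le, div_le_div_of_nonneg_right hx.2 hρ.le⟩)
          fun x _ s _ => mul_nonneg (hα0 _ _) (mul_nonneg
            (div_nonneg (mul_nonneg (hω0 _) (hA0 s)) hρ.le) (growth_pos x).le)
    _ = _ := integral_congr fun s _ => hslice s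

lemma exists_density_bound (hsol : IsApprox3Solution ρ b α ω A Ω Ωt Ωx) (hρ : 0 < ρ)
    (hb : 0 ≤ b) (hα : Continuous (Function.uncurry α)) (hα0 : ∀ x a, 0 ≤ α x a) {S : ℝ}
    (hω0 : ∀ a, 0 ≤ ω a) (hωS : ∀ a, ω a ≤ S) (hA : Continuous A) (hA0 : ∀ t, 0 ≤ A t)
    (hΩ : Continuous (Function.uncurry Ω)) {L : ℝ} (hL : ∀ t ≥ 0, A t ≤ L) :
    ∃ M, ∀ t ≥ 0, ∀ x ∈ Icc (0 : ℝ) 1, Ω x t ≤ M := by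
  obtain ⟨C, hC⟩ := ((isCompact_Icc (a := (0 : ℝ)) (b := 1)).prod
    (isCompact_Icc (a := (0 : ℝ)) (b := 1 / ρ))).bddAbove_image hΩ.continuousOn
  refine ⟨max C (S * L / ρ * exp (b / ρ)), fun t ht x hx => ?_⟩
  rcases le_or_gt t (1 / ρ) with h | h
  · exact (hC ⟨(x, t), ⟨hx, ht, h⟩, rfl⟩).trans (le_max_left _ _)
  have hs : 0 < t - x / ρ := by
    have : x / ρ ≤ 1 / ρ := div_le_div_of_nonneg_right hx.2 hρ.le
    linarith
  have hrep := hsol.eq_mul_growth hρ hα hA hs hx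
  rw [sub_add_cancel] at hrep
  rw [hrep]
  refine le_trans ?_ (le_max_right _ _)
  have hP : ω (∫ y in (0 : ℝ)..1, Ω y (t - x / ρ)) * A (t - x / ρ) ≤ S * L :=
    mul_le_mul (hωS _) (hL _ hs.le) (hA0 _) ((hω0 0).trans (hωS 0))
  have hg := growth_le_exp (b := b) hρ hb
    ((continuous_along_characteristic hα hA).comp (continuous_const.prodMk continuous_id))
    (fun y _ => hα0 y (A (t - x / ρ + y / ρ))) hx
  exact mul_le_mul (div_le_div_of_nonneg_right hP hρ.le) hg (growth_pos x).le
    (div_nonneg ((mul_nonneg (hω0 _) (hA0 _)).trans hP) hρ.le)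

theorem exists_bound (hsol : IsApprox3Solution ρ b α ω A Ω Ωt Ωx) (hρ : 0 < ρ) (hb : 0 ≤ b)
    (hα : Continuous (Function.uncurry α)) (hα0 : ∀ x a, 0 ≤ α x a)
    (hαanti : ∀ x, Antitone (α x)) (hω : Continuous ω) {S Ã : ℝ} (hω0 : ∀ a, 0 ≤ ω a)
    (hωS : ∀ a, ω a ≤ S) (hÃ : returnIntegral ρ b (fun y => α y Ã) ≤ ρ)
    (hA : Continuous A) (hA0 : ∀ t, 0 ≤ A t) (hΩ : Continuous (Function.uncurry Ω))
    (hΩ0 : ∀ x t, 0 ≤ Ω x t) :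
    ∃ M, (∀ t ≥ 0, A t ≤ M) ∧ ∀ t ≥ 0, ∀ x ∈ Icc (0 : ℝ) 1, Ω x t ≤ M := by
  have hc := continuous_along_characteristic (ρ := ρ) hα hA
  have hcs : ∀ s, Continuous fun y => α y (A (s + y / ρ)) := fun s =>
    hc.comp (continuous_const.prodMk continuous_id)
  have hI : Continuous fun t => ∫ x in (0 : ℝ)..1, α x (A t) * Ω x t :=
    continuous_parametric_intervalIntegral_of_continuous' (f := fun t x => α x (A t) * Ω x t)
      ((hα.comp (continuous_snd.prodMk (hA.comp continuous_fst))).mul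
        (hΩ.comp continuous_swap)) 0 1
  obtain ⟨L, hL⟩ := exists_bound_of_delayed_balance (τ := 1 / ρ) (S := S) (Ã := Ã)
    (K := (b * exp (b / ρ) + ρ) / ρ)
    (ψ := fun s => returnIntegral ρ b (fun y => α y (A (s + y / ρ))) / ρ)
    (by positivity) ((hω0 0).trans (hωS 0)) (by positivity) hA.continuousOn
    (continuous_influx hω hA hΩ).continuousOn hI.continuousOn
    ((continuous_returnIntegral hc).div_const ρ).continuousOn
    (fun t ht => (hsol.1 t ht).congr_deriv (by ring)) (fun t _ => hA0 t)
    (fun t _ => mul_nonneg (hω0 _) (hA0 t)) (fun t _ => mul_le_mul_of_nonneg_right (hωS _) (hA0 t))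
    (fun t _ => integral_nonneg zero_le_one fun x _ => mul_nonneg (hα0 _ _) (hΩ0 x t))
    (fun T₁ T h₁ h => hsol.integral_outflux_le hρ hα hα0 hω hω0 hA hA0 hΩ h₁ h)
    (fun s _ => div_le_div_of_nonneg_right (returnIntegral_le hρ hb (hcs s) fun y _ => hα0 _ _)
      hρ.le)
    fun s _ hwin => (div_le_one hρ).2 <| returnIntegral_le_of_le hρ hb (hcs s)
      (hα.comp (continuous_id.prodMk continuous_const)) (fun y hy => hαanti y <| hwin _
        ⟨le_add_of_nonneg_right (div_nonneg hy.1 hρ.le), by gcongr; exact hy.2⟩) hÃ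
  obtain ⟨M, hM⟩ := hsol.exists_density_bound hρ hb hα hα0 hω0 hωS hA hA0 hΩ hL
  exact ⟨max L M, fun t ht => (hL t ht).trans (le_max_left _ _),
    fun t ht x hx => (hM t ht x hx).trans (le_max_right _ _)⟩

end IsApprox3Solution

theorem stmt12_general (ρ b : ℝ) (hρ : 0 < ρ) (hb : 0 < b)
    (ω : ℝ → ℝ) (α : ℝ → ℝ → ℝ)
    (hωc : ContinuousOn ω (Set.Ici 0))
    (hωpos : ∀ A ∈ Set.Ici (0 : ℝ), 0 < ω A)
    (hωbdd : BddAbove (ω '' Set.Ici 0))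
    (hαc : ContinuousOn (fun p : ℝ × ℝ => α p.1 p.2) (Set.Icc 0 1 ×ˢ Set.Ici 0))
    (hαpos : ∀ x ∈ Set.Icc (0 : ℝ) 1, ∀ A ∈ Set.Ici (0 : ℝ), 0 < α x A)
    (hαanti : ∀ x ∈ Set.Icc (0 : ℝ) 1, AntitoneOn (α x) (Set.Ici 0))
    (hcond : ∃ Atil : ℝ, 0 < Atil ∧ ∀ A ≥ Atil,
      (∫ x in (0 : ℝ)..1,
        α x A * Real.exp ((1 / ρ) * ∫ y in (0 : ℝ)..x, (b - α y A))) < ρ) :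
    ∀ (A : ℝ → ℝ) (Ω Ωt Ωx : ℝ → ℝ → ℝ),
      IsApprox3Solution ρ b α ω A Ω Ωt Ωx →
      (∀ t ≥ (0 : ℝ), 0 ≤ A t) →
      (∀ t ≥ (0 : ℝ), ∀ x ∈ Set.Icc (0 : ℝ) 1, 0 ≤ Ω x t) →
      ∃ M : ℝ, (∀ t ≥ (0 : ℝ), A t ≤ M) ∧
        (∀ t ≥ (0 : ℝ), ∀ x ∈ Set.Icc (0 : ℝ) 1, Ω x t ≤ M) := by
  intro A Ω Ωt Ωx hsol hA0 hΩ0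
  obtain ⟨Ã, hÃ, hcondÃ⟩ := hcond
  obtain ⟨S, hS⟩ := hωbdd
  have hproj : ∀ x, (projIcc (0 : ℝ) 1 zero_le_one x : ℝ) ∈ Icc (0 : ℝ) 1 :=
    fun x => Subtype.coe_prop _
  have hthreshold :
      returnIntegral ρ b (fun y => α (projIcc (0 : ℝ) 1 zero_le_one y) (max Ã 0)) ≤ ρ := by
    rw [returnIntegral_congr (c' := fun y => α y Ã) fun y hy => by
      simp [projIcc_of_mem _ hy, max_eq_left hÃ.le]]
    exact (hcondÃ Ã le_rfl).le
  obtain ⟨M, hMA, hMΩ⟩ := (hsol.clamp hA0 hΩ0).exists_bound hρ hb.le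
    hαc.continuous_comp_projIcc_max (fun x a => (hαpos _ (hproj x) _ (le_max_right a 0)).le)
    (fun x a a' h => hαanti _ (hproj x) (mem_Ici.2 (le_max_right a 0))
      (mem_Ici.2 (le_max_right a' 0)) (max_le_max h le_rfl))
    hωc.continuous_comp_max (fun a => (hωpos _ (le_max_right a 0)).le)
    (fun a => hS ⟨_, le_max_right a 0, rfl⟩) hthreshold
    hsol.2.2.2.1.continuous_comp_max (fun t => hA0 _ (le_max_right t 0))
    hsol.2.2.2.2.1.continuous_comp_projIcc_max (fun x t => hΩ0 _ (le_max_right t 0) _ (hproj x))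
  refine ⟨M, fun t ht => ?_, fun t ht x hx => ?_⟩
  · simpa [max_eq_left ht] using hMA t ht
  · simpa [max_eq_left ht, projIcc_of_mem _ hx] using hMΩ t ht x hx

/-- Let `ρ > 0`, `b > 0`, `ω : [0,∞) → (0,∞)` continuous and bounded,
and `α : [0,1] × [0,∞) → (0,∞)` continuous, bounded, and nonincreasing in its second
argument.  If there exists `Ã > 0` such that for all `A ≥ Ã`,
`∫₀¹ α(x,A) exp((1/ρ) ∫₀ˣ (b − α(y,A)) dy) dx < ρ`, then every nonnegative C¹ solution
of the Approximation 3 system on `t ≥ 0` remains bounded for all time. -/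
theorem stmt12 (ρ b : ℝ) (hρ : 0 < ρ) (hb : 0 < b)
    (ω : ℝ → ℝ) (α : ℝ → ℝ → ℝ)
    (hωc : ContinuousOn ω (Set.Ici 0))
    (hωpos : ∀ A ∈ Set.Ici (0 : ℝ), 0 < ω A)
    (hωbdd : BddAbove (ω '' Set.Ici 0))
    (hαc : ContinuousOn (fun p : ℝ × ℝ => α p.1 p.2) (Set.Icc 0 1 ×ˢ Set.Ici 0))
    (hαpos : ∀ x ∈ Set.Icc (0 : ℝ) 1, ∀ A ∈ Set.Ici (0 : ℝ), 0 < α x A)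
    (hαbdd : ∃ M : ℝ, ∀ x ∈ Set.Icc (0 : ℝ) 1, ∀ A ∈ Set.Ici (0 : ℝ), α x A ≤ M)
    (hαanti : ∀ x ∈ Set.Icc (0 : ℝ) 1, AntitoneOn (α x) (Set.Ici 0))
    (hcond : ∃ Atil : ℝ, 0 < Atil ∧ ∀ A ≥ Atil,
      (∫ x in (0 : ℝ)..1,
        α x A * Real.exp ((1 / ρ) * ∫ y in (0 : ℝ)..x, (b - α y A))) < ρ) :
    ∀ (A : ℝ → ℝ) (Ω Ωt Ωx : ℝ → ℝ → ℝ),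
      IsApprox3Solution ρ b α ω A Ω Ωt Ωx →
      (∀ t ≥ (0 : ℝ), 0 ≤ A t) →
      (∀ t ≥ (0 : ℝ), ∀ x ∈ Set.Icc (0 : ℝ) 1, 0 ≤ Ω x t) →
      ∃ M : ℝ, (∀ t ≥ (0 : ℝ), A t ≤ M) ∧
        (∀ t ≥ (0 : ℝ), ∀ x ∈ Set.Icc (0 : ℝ) 1, Ω x t ≤ M) :=
  stmt12_general ρ b hρ hb ω α hωc hωpos hωbdd hαc hαpos hαanti hcond
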